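/- arXiv:2605.09643 — 2 statements merged into one kernel-verified Lean document; each statement's English description precedes it below -/
import Mathlib

section
/- (Differential Representer Theorem) Fix points X^{(1)}, …, X^{(N)} ∈ D̄ and values Y_N = (Y^{(1)}, …, Y^{(N)}) ∈ ℝ^N, and let λ > 0. The unique minimizer û_{λ,N} over H_K of the regularized empirical risk R̂_{λ,N}(u) = (1/N) Σ_{i=1}^N |P_s u(X^{(i)}) − Y^{(i)}|² + λ‖u‖²_{H_K} can be represented as û_{λ,N} = Σ_{i=1}^N ĉ_i · P_s^{(1,0)}K(X^{(i)},·), where the coefficient vector ĉ ∈ ℝ^N is given by ĉ = (G + λN·I)^{-1} Y_N, with G the N × N generalized Gram matrix G_{ij} = P_s^{(1,1)}K(X^{(i)}, X^{(j)}) and I the N × N identity matrix (G + λN·I is invertible since G is positive semidefinite). -/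
/-!
Every `P_s u(X⁽ⁱ⁾)` is the inner product `⟪u, wᵢ⟫` with `wᵢ = P_s^{(1,0)}K(X⁽ⁱ⁾,·)`, so the risk is
a regularized least-squares functional on a Hilbert space. If `c` solves `(G + λN·I) c = Y`, then
`û = ∑ cᵢ wᵢ` satisfies the first-order condition `N⁻¹ (Yᵢ - ⟪û, wᵢ⟫) = λ cᵢ`, which makes the cross
term vanish when the risk is expanded around `û`: `R(v) = R(û) + N⁻¹ ∑ ⟪v - û, wᵢ⟫² + λ‖v - û‖²`.
Hence `û` is the unique minimizer. Invertibility holds because the Gram matrix `G` is positive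
semidefinite.
-/

open MeasureTheory RealInnerProductSpace

noncomputable section

/-- The set `I_s` of multi-indices `α ∈ ℕ^d` with `|α| ≤ s`. -/
def Is (d s : ℕ) : Finset (Fin d → ℕ) :=
  (Fintype.piFinset fun _ : Fin d => Finset.range (s + 1)).filter fun α => (∑ i, α i) ≤ s

/-- `P_s u` evaluated pointwise, where `Dk α u x` stands for `(∂^α u)(x)`. -/
def Psu {Xt H : Type*} (d s : ℕ) (φ : (Fin d → ℕ) → Xt → ℝ)
    (Dk : (Fin d → ℕ) → H → Xt → ℝ) (u : H) (x : Xt) : ℝ :=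
  ∑ α ∈ Is d s, φ α x * Dk α u x

/-- `P_s^{(1,0)} K (x, ·) = ∑_{α ∈ I_s} φ_α(x) • ∂^α_{(1)} K(x,·) ∈ H_K`. -/
def KP {Xt H : Type*} [NormedAddCommGroup H] [InnerProductSpace ℝ H]
    (d s : ℕ) (φ : (Fin d → ℕ) → Xt → ℝ) (k : (Fin d → ℕ) → Xt → H) (x : Xt) : H :=
  ∑ α ∈ Is d s, φ α x • k α x

open Matrix

section RegularizedLeastSquares

variable {ι H : Type*} [Fintype ι] [NormedAddCommGroup H] [InnerProductSpace ℝ H]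
  (w : ι → H) (Y : ι → ℝ)

def regRisk (a lam : ℝ) (u : H) : ℝ :=
  a * ∑ i, (⟪u, w i⟫ - Y i) ^ 2 + lam * ‖u‖ ^ 2

lemma inner_sum_smul_eq_gram_mulVec (c : ι → ℝ) (i : ι) :
    ⟪∑ j, c j • w j, w i⟫ = (gram ℝ w *ᵥ c) i := by
  simp only [sum_inner, real_inner_smul_left, mulVec, dotProduct, gram_apply]
  exact Finset.sum_congr rfl fun j _ => by rw [real_inner_comm]; ring

variable {w Y}

lemma regRisk_eq_add_of_stationary {a lam : ℝ} {c : ι → ℝ}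
    (hc : ∀ i, a * (Y i - ⟪∑ j, c j • w j, w i⟫) = lam * c i) (v : H) :
    regRisk w Y a lam v = regRisk w Y a lam (∑ j, c j • w j) +
      (a * ∑ i, ⟪v - ∑ j, c j • w j, w i⟫ ^ 2 + lam * ‖v - ∑ j, c j • w j‖ ^ 2) := by
  set u₀ := ∑ j, c j • w j
  obtain ⟨h, rfl⟩ : ∃ h, v = u₀ + h := ⟨v - u₀, by abel⟩
  have hcross : a * ∑ i, (⟪u₀, w i⟫ - Y i) * ⟪h, w i⟫ = -(lam * ⟪u₀, h⟫) := by
    have hu₀h : ⟪u₀, h⟫ = ∑ i, c i * ⟪h, w i⟫ := by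
      rw [real_inner_comm]
      simp only [u₀, inner_sum, real_inner_smul_right]
    rw [hu₀h, Finset.mul_sum, Finset.mul_sum, ← Finset.sum_neg_distrib]
    exact Finset.sum_congr rfl fun i _ => by linear_combination (-⟪h, w i⟫) * hc i
  have hsq : ∀ i, (⟪u₀ + h, w i⟫ - Y i) ^ 2 =
      (⟪u₀, w i⟫ - Y i) ^ 2 + 2 * ((⟪u₀, w i⟫ - Y i) * ⟪h, w i⟫) + ⟪h, w i⟫ ^ 2 := fun i => by
    rw [inner_add_left]; ring
  simp only [regRisk, add_sub_cancel_left, hsq, Finset.sum_add_distrib, ← Finset.mul_sum,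
    norm_add_sq_real]
  linear_combination 2 * hcross

lemma isMinimizer_regRisk_iff_of_stationary {a lam : ℝ} (ha : 0 ≤ a) (hlam : 0 < lam)
    {c : ι → ℝ} (hc : ∀ i, a * (Y i - ⟪∑ j, c j • w j, w i⟫) = lam * c i) (u : H) :
    (∀ v, regRisk w Y a lam u ≤ regRisk w Y a lam v) ↔ u = ∑ j, c j • w j := by
  set u₀ := ∑ j, c j • w j
  have hexcess_nonneg : ∀ v, 0 ≤ a * ∑ i, ⟪v - u₀, w i⟫ ^ 2 := fun v => by positivity
  constructor
  · intro hu
    have hle := hu u₀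
    rw [regRisk_eq_add_of_stationary hc u] at hle
    have hnorm : ‖u - u₀‖ ^ 2 ≤ 0 := by nlinarith [hexcess_nonneg u]
    exact sub_eq_zero.1 (by simpa using hnorm)
  · rintro rfl v
    rw [regRisk_eq_add_of_stationary hc v]
    nlinarith [hexcess_nonneg v, sq_nonneg ‖v - u₀‖]

variable [DecidableEq ι]

lemma stationary_of_gram_add_smul_one_mulVec_eq {lam : ℝ} {c : ι → ℝ}
    (hc : (gram ℝ w + (lam * Fintype.card ι) • (1 : Matrix ι ι ℝ)) *ᵥ c = Y) (i : ι) :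
    (Fintype.card ι : ℝ)⁻¹ * (Y i - ⟪∑ j, c j • w j, w i⟫) = lam * c i := by
  have hcard : (Fintype.card ι : ℝ) ≠ 0 := by
    have : Nonempty ι := ⟨i⟩
    positivity
  rw [inner_sum_smul_eq_gram_mulVec, ← hc, add_mulVec, smul_mulVec, one_mulVec]
  simp only [Pi.add_apply, Pi.smul_apply, smul_eq_mul]
  field_simp
  ring

variable (w) in
lemma isUnit_gram_add_smul_one {lam : ℝ} (hlam : 0 < lam) :
    IsUnit (gram ℝ w + (lam * Fintype.card ι) • (1 : Matrix ι ι ℝ)) := by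
  rcases isEmpty_or_nonempty ι with hι | hι
  · exact isUnit_of_subsingleton _
  · exact (PosDef.posSemidef_add (posSemidef_gram ℝ w) (PosDef.one.smul (by positivity))).isUnit

variable (w Y) in
theorem isUnit_and_isMinimizer_regRisk_iff {lam : ℝ} (hlam : 0 < lam) :
    IsUnit (gram ℝ w + (lam * Fintype.card ι) • (1 : Matrix ι ι ℝ)) ∧
    ∀ u, (∀ v, regRisk w Y (Fintype.card ι)⁻¹ lam u ≤ regRisk w Y (Fintype.card ι)⁻¹ lam v) ↔
      u = ∑ i, ((gram ℝ w + (lam * Fintype.card ι) • (1 : Matrix ι ι ℝ))⁻¹ *ᵥ Y) i • w i := by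
  set M := gram ℝ w + (lam * Fintype.card ι) • (1 : Matrix ι ι ℝ)
  have hM : IsUnit M := isUnit_gram_add_smul_one w hlam
  have hsolve : M *ᵥ (M⁻¹ *ᵥ Y) = Y := by
    rw [mulVec_mulVec, mul_nonsing_inv M ((isUnit_iff_isUnit_det M).1 hM), one_mulVec]
  exact ⟨hM, isMinimizer_regRisk_iff_of_stationary (by positivity) hlam
    (stationary_of_gram_add_smul_one_mulVec_eq hsolve)⟩

end RegularizedLeastSquares

lemma Psu_eq_inner_KP {Xt H : Type*} [NormedAddCommGroup H] [InnerProductSpace ℝ H]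
    {d s : ℕ} (φ : (Fin d → ℕ) → Xt → ℝ) {Dk : (Fin d → ℕ) → H → Xt → ℝ}
    {k : (Fin d → ℕ) → Xt → H} (hrep : ∀ α ∈ Is d s, ∀ (u : H) (x : Xt), Dk α u x = ⟪u, k α x⟫)
    (u : H) (x : Xt) : Psu d s φ Dk u x = ⟪u, KP d s φ k x⟫ := by
  rw [Psu, KP, inner_sum]
  exact Finset.sum_congr rfl fun α hα => by rw [hrep α hα, real_inner_smul_right]

theorem statement_9_general
    {Xt H : Type*}
    [NormedAddCommGroup H] [InnerProductSpace ℝ H]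
    (d s : ℕ)
    (φ : (Fin d → ℕ) → Xt → ℝ)
    (Dk : (Fin d → ℕ) → H → Xt → ℝ)
    (k : (Fin d → ℕ) → Xt → H)
    (hrep : ∀ α ∈ Is d s, ∀ (u : H) (x : Xt), Dk α u x = ⟪u, k α x⟫)
    (N : ℕ) (X : Fin N → Xt) (Y : Fin N → ℝ)
    (lam : ℝ) (hlam : 0 < lam)
    (G : Matrix (Fin N) (Fin N) ℝ)
    (hG : G = Matrix.of fun i j : Fin N => ⟪KP d s φ k (X i), KP d s φ k (X j)⟫) :
    IsUnit (G + (lam * N) • (1 : Matrix (Fin N) (Fin N) ℝ)) ∧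
    (∃! u : H, ∀ v : H,
      (N : ℝ)⁻¹ * (∑ i : Fin N, (Psu d s φ Dk u (X i) - Y i) ^ 2) + lam * ‖u‖ ^ 2
        ≤ (N : ℝ)⁻¹ * (∑ i : Fin N, (Psu d s φ Dk v (X i) - Y i) ^ 2) + lam * ‖v‖ ^ 2) ∧
    ∀ u : H, (∀ v : H,
        (N : ℝ)⁻¹ * (∑ i : Fin N, (Psu d s φ Dk u (X i) - Y i) ^ 2) + lam * ‖u‖ ^ 2
          ≤ (N : ℝ)⁻¹ * (∑ i : Fin N, (Psu d s φ Dk v (X i) - Y i) ^ 2) + lam * ‖v‖ ^ 2) →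
      u = ∑ i : Fin N,
        ((G + (lam * N) • (1 : Matrix (Fin N) (Fin N) ℝ))⁻¹.mulVec Y) i • KP d s φ k (X i) := by
  have hG_gram : G = gram ℝ fun i => KP d s φ k (X i) := hG
  obtain ⟨hunit, hmin⟩ := isUnit_and_isMinimizer_regRisk_iff (fun i => KP d s φ k (X i)) Y hlam
  simp only [Fintype.card_fin, regRisk] at hunit hmin
  rw [hG_gram]
  simp only [Psu_eq_inner_KP φ hrep]
  exact ⟨hunit, ⟨_, (hmin _).2 rfl, fun u hu => (hmin u).1 hu⟩, fun u hu => (hmin u).1 hu⟩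

/-- **Differential Representer Theorem.** For `λ > 0` the regularized empirical risk
`R̂_{λ,N}(u) = (1/N) ∑ᵢ |P_s u(X⁽ⁱ⁾) − Y⁽ⁱ⁾|² + λ‖u‖²` has a unique minimizer over `H_K`,
the matrix `G + λN·I` is invertible (where `G_{ij} = P_s^{(1,1)}K(X⁽ⁱ⁾,X⁽ʲ⁾)`), and the
minimizer is `û_{λ,N} = ∑ᵢ ĉᵢ • P_s^{(1,0)}K(X⁽ⁱ⁾,·)` with `ĉ = (G + λN·I)⁻¹ Y_N`. -/
theorem statement_9
    {Xt H : Type*} [MeasurableSpace Xt]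
    [NormedAddCommGroup H] [InnerProductSpace ℝ H] [CompleteSpace H]
    (d s : ℕ)
    (φ : (Fin d → ℕ) → Xt → ℝ)
    (Dk : (Fin d → ℕ) → H → Xt → ℝ)
    (k : (Fin d → ℕ) → Xt → H)
    (C κ : ℝ) (hC0 : 0 ≤ C) (hκ0 : 0 ≤ κ)
    (hC : ∀ α ∈ Is d s, ∀ x : Xt, |φ α x| ≤ C)
    (hκ : ∀ α ∈ Is d s, ∀ x : Xt, ‖k α x‖ ≤ κ)
    (hrep : ∀ α ∈ Is d s, ∀ (u : H) (x : Xt), Dk α u x = ⟪u, k α x⟫)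
    (N : ℕ) (X : Fin N → Xt) (Y : Fin N → ℝ)
    (lam : ℝ) (hlam : 0 < lam)
    (G : Matrix (Fin N) (Fin N) ℝ)
    (hG : G = Matrix.of fun i j : Fin N => ⟪KP d s φ k (X i), KP d s φ k (X j)⟫) :
    IsUnit (G + (lam * N) • (1 : Matrix (Fin N) (Fin N) ℝ)) ∧
    (∃! u : H, ∀ v : H,
      (N : ℝ)⁻¹ * (∑ i : Fin N, (Psu d s φ Dk u (X i) - Y i) ^ 2) + lam * ‖u‖ ^ 2
        ≤ (N : ℝ)⁻¹ * (∑ i : Fin N, (Psu d s φ Dk v (X i) - Y i) ^ 2) + lam * ‖v‖ ^ 2) ∧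
    ∀ u : H, (∀ v : H,
        (N : ℝ)⁻¹ * (∑ i : Fin N, (Psu d s φ Dk u (X i) - Y i) ^ 2) + lam * ‖u‖ ^ 2
          ≤ (N : ℝ)⁻¹ * (∑ i : Fin N, (Psu d s φ Dk v (X i) - Y i) ^ 2) + lam * ‖v‖ ^ 2) →
      u = ∑ i : Fin N,
        ((G + (lam * N) • (1 : Matrix (Fin N) (Fin N) ℝ))⁻¹.mulVec Y) i • KP d s φ k (X i) :=
  statement_9_general d s φ Dk k hrep N X Y lam hlam G hG
end
end

section
/- Let H be a real Hilbert space and B : H → H a compact, self-adjoint, positive semidefinite operator with spectral decomposition B = Σ_n λ_n ⟨·, e_n⟩ e_n, where λ_n > 0 and (e_n) is an orthonormal family. Let γ ∈ (0,1), λ > 0, and suppose u ∈ H lies in the range of B^γ, say u = B^γ ψ with ψ ∈ (ker B)^⊥. Then ‖(B + λI)^{-1} B u − u‖_H = ‖λ (B + λI)^{-1} u‖_H ≤ λ^γ ‖ψ‖_H. -/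
/-!
In the eigenbasis `B + λ` multiplies the `n`-th coefficient by `λₙ + λ`, and it is injective
since `B ≥ 0`. Hence `z = u - λ w` and `w = ∑ₙ λₙ^γ ⟨ψ, eₙ⟩ / (λₙ + λ) • eₙ`, so the `n`-th
coefficient of `λ w` is at most `(λ / λₙ)^γ λₙ^γ |⟨ψ, eₙ⟩| = λ^γ |⟨ψ, eₙ⟩|` in absolute value;
Parseval for `λ w` and Bessel for `ψ` conclude.
-/

open RealInnerProductSpace

lemma Real.div_add_le_div_rpow {t lam γ : ℝ} (ht : 0 < t) (hlam : 0 < lam)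
    (hγ₀ : 0 ≤ γ) (hγ₁ : γ ≤ 1) : lam / (t + lam) ≤ (lam / t) ^ γ := by
  rcases le_total lam t with hle | hle
  · calc lam / (t + lam) ≤ lam / t := by gcongr; linarith
      _ ≤ (lam / t) ^ γ :=
        Real.self_le_rpow_of_le_one (by positivity) ((div_le_one ht).2 hle) hγ₁
  · calc lam / (t + lam) ≤ 1 := (div_le_one (by positivity)).2 (by linarith)
      _ ≤ (lam / t) ^ γ := Real.one_le_rpow ((one_le_div ht).2 hle) hγ₀

lemma Real.abs_mul_rpow_mul_div_add_le {t lam γ : ℝ} (ht : 0 < t) (hlam : 0 < lam)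
    (hγ₀ : 0 ≤ γ) (hγ₁ : γ ≤ 1) (a : ℝ) :
    |lam * (t ^ γ * a / (t + lam))| ≤ lam ^ γ * |a| := by
  have htγ : 0 < t ^ γ := Real.rpow_pos_of_pos ht γ
  calc |lam * (t ^ γ * a / (t + lam))| = lam / (t + lam) * t ^ γ * |a| := by
        rw [abs_mul, abs_div, abs_mul, abs_of_pos hlam, abs_of_pos (add_pos ht hlam),
          abs_of_pos htγ]
        ring
    _ ≤ (lam / t) ^ γ * t ^ γ * |a| := by
        gcongr
        exact Real.div_add_le_div_rpow ht hlam hγ₀ hγ₁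
    _ = lam ^ γ * |a| := by rw [Real.div_rpow hlam.le ht.le, div_mul_cancel₀ _ htγ.ne']

lemma summable_sq_of_abs_le_mul {ι : Type*} {c d : ι → ℝ} {K : ℝ}
    (h : ∀ n, |c n| ≤ K * |d n|) (hd : Summable fun n => d n ^ 2) :
    Summable fun n => c n ^ 2 :=
  (hd.mul_left (K ^ 2)).of_nonneg_of_le (fun n => sq_nonneg _) fun n => by
    simpa only [sq_abs, mul_pow] using pow_le_pow_left₀ (abs_nonneg _) (h n) 2

namespace Orthonormal

variable {H : Type*} [NormedAddCommGroup H] [InnerProductSpace ℝ H]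
  {ι : Type*} {e : ι → H}

lemma summable_inner_sq (hON : Orthonormal ℝ e) (x : H) :
    Summable fun n => ⟪x, e n⟫ ^ 2 := by
  simpa [real_inner_comm, Real.norm_eq_abs, sq_abs] using hON.inner_products_summable x

lemma tsum_inner_sq_le (hON : Orthonormal ℝ e) (x : H) :
    ∑' n, ⟪x, e n⟫ ^ 2 ≤ ‖x‖ ^ 2 := by
  simpa [real_inner_comm, Real.norm_eq_abs, sq_abs] using hON.tsum_inner_products_le x

lemma summable_smul_of_summable_sq [CompleteSpace H] (hON : Orthonormal ℝ e) {c : ι → ℝ}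
    (hc : Summable fun n => c n ^ 2) : Summable fun n => c n • e n := by
  simpa using (hON.orthogonalFamily.summable_iff_norm_sq_summable c).2
    (by simpa [Real.norm_eq_abs, sq_abs] using hc)

lemma inner_tsum_smul (hON : Orthonormal ℝ e) {c : ι → ℝ}
    (hc : Summable fun n => c n • e n) (n : ι) : ⟪∑' m, c m • e m, e n⟫ = c n := by
  rw [real_inner_comm, ← innerSL_apply_apply, (innerSL ℝ (e n)).map_tsum hc, tsum_eq_single n]
  · simp [hON.1 n]
  · intro m hm
    simp [hON.inner_eq_zero hm.symm]

lemma norm_tsum_smul_sq [CompleteSpace H] (hON : Orthonormal ℝ e) {c : ι → ℝ}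
    (hc : Summable fun n => c n ^ 2) : ‖∑' n, c n • e n‖ ^ 2 = ∑' n, c n ^ 2 := by
  have hs := hON.summable_smul_of_summable_sq hc
  calc ‖∑' n, c n • e n‖ ^ 2 = ⟪∑' n, c n • e n, ∑' m, c m • e m⟫ :=
        (real_inner_self_eq_norm_sq _).symm
    _ = ∑' m, ⟪∑' n, c n • e n, c m • e m⟫ := (innerSL ℝ _).map_tsum hs
    _ = ∑' m, c m ^ 2 :=
        tsum_congr fun m => by rw [real_inner_smul_right, hON.inner_tsum_smul hs, sq]

lemma norm_tsum_smul_le [CompleteSpace H] (hON : Orthonormal ℝ e) {c : ι → ℝ} {K : ℝ}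
    (hK : 0 ≤ K) (x : H) (hc : ∀ n, |c n| ≤ K * |⟪x, e n⟫|) :
    ‖∑' n, c n • e n‖ ≤ K * ‖x‖ := by
  have hx := hON.summable_inner_sq x
  have hc2 := summable_sq_of_abs_le_mul hc hx
  refine (pow_le_pow_iff_left₀ (norm_nonneg _) (by positivity) two_ne_zero).1 ?_
  calc ‖∑' n, c n • e n‖ ^ 2 = ∑' n, c n ^ 2 := hON.norm_tsum_smul_sq hc2
    _ ≤ ∑' n, K ^ 2 * ⟪x, e n⟫ ^ 2 := hc2.tsum_le_tsum (fun n => by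
        simpa only [sq_abs, mul_pow] using pow_le_pow_left₀ (abs_nonneg _) (hc n) 2)
        (hx.mul_left _)
    _ = K ^ 2 * ∑' n, ⟪x, e n⟫ ^ 2 := tsum_mul_left
    _ ≤ (K * ‖x‖) ^ 2 := by rw [mul_pow]; gcongr; exact hON.tsum_inner_sq_le x

variable {B : H →L[ℝ] H} {l : ι → ℝ}

lemma diagonal_apply_self (hON : Orthonormal ℝ e)
    (hB : ∀ v, B v = ∑' n, (l n * ⟪v, e n⟫) • e n) (n : ι) : B (e n) = l n • e n := by
  rw [hB, tsum_eq_single n]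
  · simp [hON.1 n]
  · intro m hm
    simp [hON.inner_eq_zero hm.symm]

lemma abs_le_opNorm_of_diagonal (hON : Orthonormal ℝ e)
    (hB : ∀ v, B v = ∑' n, (l n * ⟪v, e n⟫) • e n) (n : ι) : |l n| ≤ ‖B‖ := by
  simpa [hON.diagonal_apply_self hB, norm_smul, hON.1 n] using B.le_opNorm (e n)

lemma diagonal_apply_tsum (hON : Orthonormal ℝ e)
    (hB : ∀ v, B v = ∑' n, (l n * ⟪v, e n⟫) • e n) {c : ι → ℝ}
    (hc : Summable fun n => c n • e n) : B (∑' n, c n • e n) = ∑' n, (l n * c n) • e n := by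
  rw [hB]
  exact tsum_congr fun n => by rw [hON.inner_tsum_smul hc]

lemma diagonal_resolvent_tsum [CompleteSpace H] (hON : Orthonormal ℝ e)
    (hB : ∀ v, B v = ∑' n, (l n * ⟪v, e n⟫) • e n) (hl : ∀ n, 0 ≤ l n) {lam : ℝ}
    (hlam : 0 < lam) {c : ι → ℝ} (hc : Summable fun n => c n ^ 2) :
    B (∑' n, (c n / (l n + lam)) • e n) + lam • ∑' n, (c n / (l n + lam)) • e n
      = ∑' n, c n • e n := by
  have hpos n : 0 < l n + lam := by linarith [hl n]
  have hdiv : Summable fun n => (c n / (l n + lam)) ^ 2 :=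
    summable_sq_of_abs_le_mul (K := lam⁻¹) (d := c) (fun n => by
      rw [abs_div, abs_of_pos (hpos n), div_eq_inv_mul]
      gcongr; linarith [hl n]) hc
  have hmul : Summable fun n => (l n * (c n / (l n + lam))) ^ 2 :=
    summable_sq_of_abs_le_mul (K := 1) (d := c) (fun n => by
      rw [abs_mul, abs_div, abs_of_nonneg (hl n), abs_of_pos (hpos n), one_mul,
        mul_div_assoc', div_le_iff₀ (hpos n)]
      nlinarith [abs_nonneg (c n)]) hc
  rw [hON.diagonal_apply_tsum hB (hON.summable_smul_of_summable_sq hdiv),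
    ← tsum_const_smul'', ← (hON.summable_smul_of_summable_sq hmul).tsum_add
      ((hON.summable_smul_of_summable_sq hdiv).const_smul lam)]
  refine tsum_congr fun n => ?_
  rw [smul_smul, ← add_smul]
  have := (hpos n).ne'
  congr 1
  field_simp

end Orthonormal

lemma ContinuousLinearMap.IsPositive.eq_of_apply_add_smul_eq {H : Type*}
    [NormedAddCommGroup H] [InnerProductSpace ℝ H] {B : H →L[ℝ] H} (hB : B.IsPositive)
    {lam : ℝ} (hlam : 0 < lam) {x y : H} (h : B x + lam • x = B y + lam • y) : x = y := by
  have hd : B (x - y) + lam • (x - y) = 0 := by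
    rw [map_sub, smul_sub, sub_add_sub_comm, h, sub_self]
  have h0 : ⟪B (x - y), x - y⟫ + lam * ‖x - y‖ ^ 2 = 0 := by
    rw [← real_inner_self_eq_norm_sq, ← real_inner_smul_left, ← inner_add_left, hd,
      inner_zero_left]
  have : ‖x - y‖ ^ 2 = 0 := by nlinarith [hB.inner_nonneg_left (x - y), sq_nonneg ‖x - y‖]
  simpa [sub_eq_zero] using this

theorem statement_15_general
    {H : Type*} [NormedAddCommGroup H] [InnerProductSpace ℝ H] [CompleteSpace H]
    {ι : Type*} (B : H →L[ℝ] H)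
    (hpos : B.IsPositive)
    (l : ι → ℝ) (e : ι → H) (hl : ∀ n, 0 < l n) (hON : Orthonormal ℝ e)
    (hB : ∀ v : H, B v = ∑' n : ι, (l n * ⟪v, e n⟫) • e n)
    (γ : ℝ) (hγ : γ ∈ Set.Ioo (0 : ℝ) 1) (lam : ℝ) (hlam : 0 < lam)
    (u ψ : H)
    (hu : u = ∑' n : ι, (l n ^ γ * ⟪ψ, e n⟫) • e n)
    (w z : H) (hw : B w + lam • w = u) (hz : B z + lam • z = B u) :
    ‖z - u‖ = ‖lam • w‖ ∧ ‖lam • w‖ ≤ lam ^ γ * ‖ψ‖ := by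
  obtain ⟨hγ₀, hγ₁⟩ := hγ
  have hz_eq : z = u - lam • w := hpos.eq_of_apply_add_smul_eq hlam (by
    rw [hz, map_sub, map_smul, ← hw]; module)
  refine ⟨by rw [hz_eq, sub_sub_cancel_left, norm_neg], ?_⟩
  set c : ι → ℝ := fun n => l n ^ γ * ⟪ψ, e n⟫
  have hc : Summable fun n => c n ^ 2 :=
    summable_sq_of_abs_le_mul (K := ‖B‖ ^ γ) (fun n => by
      rw [abs_mul, abs_of_pos (Real.rpow_pos_of_pos (hl n) γ)]
      gcongr
      · exact (hl n).le
      · exact (le_abs_self _).trans (hON.abs_le_opNorm_of_diagonal hB n))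
      (hON.summable_inner_sq ψ)
  have hw_eq : w = ∑' n, (c n / (l n + lam)) • e n :=
    hpos.eq_of_apply_add_smul_eq hlam (by
      rw [hw, hu, hON.diagonal_resolvent_tsum hB (fun n => (hl n).le) hlam hc])
  rw [hw_eq, ← tsum_const_smul'']
  simp_rw [smul_smul]
  refine hON.norm_tsum_smul_le (by positivity) ψ fun n => ?_
  simpa only [c, mul_div_assoc] using
    Real.abs_mul_rpow_mul_div_add_le (hl n) hlam hγ₀.le hγ₁.le ⟪ψ, e n⟫

/-- Let `B` be a compact, self-adjoint, positive semidefinite operator on a real Hilbert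
space with spectral decomposition `B = ∑ₙ λₙ ⟨·, eₙ⟩ eₙ` (`λₙ > 0`, `(eₙ)` orthonormal),
let `γ ∈ (0,1)`, `λ > 0`, and `u = B^γ ψ` with `ψ ∈ (ker B)^⊥` (where
`B^γ v = ∑ₙ λₙ^γ ⟨v, eₙ⟩ eₙ`). Then
`‖(B + λI)⁻¹ B u − u‖ = ‖λ (B + λI)⁻¹ u‖ ≤ λ^γ ‖ψ‖`; here `w = (B + λI)⁻¹ u` and
`z = (B + λI)⁻¹ B u` are characterized by `B w + λ w = u` and `B z + λ z = B u`. -/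
theorem statement_15
    {H : Type*} [NormedAddCommGroup H] [InnerProductSpace ℝ H] [CompleteSpace H]
    {ι : Type*} (B : H →L[ℝ] H)
    (hcomp : IsCompactOperator ⇑B) (hsa : IsSelfAdjoint B) (hpos : B.IsPositive)
    (l : ι → ℝ) (e : ι → H) (hl : ∀ n, 0 < l n) (hON : Orthonormal ℝ e)
    (hB : ∀ v : H, B v = ∑' n : ι, (l n * ⟪v, e n⟫) • e n)
    (γ : ℝ) (hγ : γ ∈ Set.Ioo (0 : ℝ) 1) (lam : ℝ) (hlam : 0 < lam)
    (u ψ : H) (hψ : ψ ∈ (LinearMap.ker (B : H →ₗ[ℝ] H))ᗮ)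
    (hu : u = ∑' n : ι, (l n ^ γ * ⟪ψ, e n⟫) • e n)
    (w z : H) (hw : B w + lam • w = u) (hz : B z + lam • z = B u) :
    ‖z - u‖ = ‖lam • w‖ ∧ ‖lam • w‖ ≤ lam ^ γ * ‖ψ‖ :=
  statement_15_general B hpos l e hl hON hB γ hγ lam hlam u ψ hu w z hw hz
end
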